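/- arXiv:1308.6811 — 3 statements merged into one kernel-verified Lean document; each statement's English description precedes it below -/
import Mathlib

section
/- Let R be a ring and F a chain complex of right R-modules with F_a and F_{a-1} flat. For a left R-module N, let φ_a : Z_a(F) ⊗_R N → Z_a(F ⊗_R N) be the natural map sending z ⊗ x to z ⊗ x, where Z_a denotes the module of a-cycles. Then there is an exact sequence 0 → Tor_1^R(B_{a-1}(F), N) → Z_a(F) ⊗_R N → Z_a(F ⊗_R N) → Tor_1^R(C_{a-1}(F), N) → 0, where B_{a-1}(F) = Im(∂_a) and C_{a-1}(F) = Coker(∂_a). -/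
open CategoryTheory TensorProduct

variable {R : Type} [CommRing R]
variable {Fa Fb N : Type} [AddCommGroup Fa] [Module R Fa] [AddCommGroup Fb] [Module R Fb]
  [AddCommGroup N] [Module R N]

/-- The natural map `Z_a(F) ⊗ N → Z_a(F ⊗ N)`, `z ⊗ x ↦ z ⊗ x`, where `Z_a(F) = ker ∂_a`
and `Z_a(F ⊗ N) = ker (∂_a ⊗ N)`; here `∂_a` is the differential `f : F_a → F_{a-1}`. -/
noncomputable def cycleComparison (f : Fa →ₗ[R] Fb) (N : Type) [AddCommGroup N] [Module R N] :
    (↥(LinearMap.ker f) ⊗[R] N) →ₗ[R] ↥(LinearMap.ker (f.rTensor N)) :=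
  LinearMap.codRestrict _ (((LinearMap.ker f).subtype).rTensor N) (fun z => by
    simp only [LinearMap.mem_ker]
    have h : (f.rTensor N).comp (((LinearMap.ker f).subtype).rTensor N) = 0 := by
      rw [← LinearMap.rTensor_comp]
      have h0 : f.comp (LinearMap.ker f).subtype = 0 := by
        ext x; exact x.2
      rw [h0, LinearMap.rTensor_zero]
    exact DFunLike.congr_fun h z)

/-!
For `0 → Z → A → X → 0` exact with `A` flat, `Tor₁(X, N) ≅ ker (Z ⊗ N → A ⊗ N)`. Indeed, computing
`Tor₁` from a projective resolution with `0 → Ω → P₀ → N → 0` exact gives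
`ker (X ⊗ Ω → X ⊗ P₀)`, and flatness of `A` and `P₀` identifies both kernels with
`(range (A ⊗ Ω) ⊓ range (Z ⊗ P₀)) / range (Z ⊗ Ω)` inside `A ⊗ P₀`.
Applied to `0 → Z_a → F_a → B_{a-1} → 0` this identifies `Tor₁(B_{a-1}, N)` with `ker φ_a`;
applied to `0 → B_{a-1} → F_{a-1} → C_{a-1} → 0` it identifies `Tor₁(C_{a-1}, N)` with
`ker (B_{a-1} ⊗ N → F_{a-1} ⊗ N)`, which is `coker φ_a` by right exactness of `- ⊗ N`.
-/

open Function LinearMap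

section LinearAlgebra

variable {R : Type*} [Ring R] {M₀ M₁ M₂ M₃ Y₁ Y₂ Y₃ : Type*}
  [AddCommGroup M₀] [Module R M₀] [AddCommGroup M₁] [Module R M₁]
  [AddCommGroup M₂] [Module R M₂] [AddCommGroup M₃] [Module R M₃]
  [AddCommGroup Y₁] [Module R Y₁] [AddCommGroup Y₂] [Module R Y₂]
  [AddCommGroup Y₃] [Module R Y₃]

theorem Function.Exact.nonempty_ker_quotient_range_equiv_ker {u : M₀ →ₗ[R] M₁}
    {p : M₁ →ₗ[R] M₂} (hup : Exact u p) (hp : Surjective p) (j : M₂ →ₗ[R] M₃)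
    {g : M₁ →ₗ[R] M₃} (hg : g = j ∘ₗ p) (c : M₀ →ₗ[R] ker g) (hc : ∀ x, (c x : M₁) = u x) :
    Nonempty ((ker g ⧸ range c) ≃ₗ[R] ker j) := by
  subst hg
  let ψ : ker (j ∘ₗ p) →ₗ[R] ker j :=
    codRestrict _ (p ∘ₗ (ker (j ∘ₗ p)).subtype) fun v => v.2
  have hψ : Surjective ψ := by
    rintro ⟨y, hy⟩
    obtain ⟨x, rfl⟩ := hp y
    exact ⟨⟨x, hy⟩, rfl⟩
  have hcψ : Exact c ψ := by
    rintro ⟨v, hv⟩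
    refine (Subtype.ext_iff.trans (hup v)).trans ?_
    simp only [Set.mem_range, Subtype.ext_iff, hc]
  exact ⟨hcψ.linearEquivOfSurjective hψ⟩

theorem nonempty_ker_equiv_quotient_inf_range {u : M₀ →ₗ[R] M₁} {p : M₁ →ₗ[R] M₂}
    {v : Y₁ →ₗ[R] Y₂} {q : Y₂ →ₗ[R] Y₃} (hup : Exact u p) (hp : Surjective p) (hvq : Exact v q)
    {a₂ : M₁ →ₗ[R] Y₂} (ha₂ : Injective a₂) (a₃ : M₂ →ₗ[R] Y₃) (hcomm : a₃ ∘ₗ p = q ∘ₗ a₂) :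
    Nonempty (ker a₃ ≃ₗ[R]
      (↥(range a₂ ⊓ range v) ⧸ (range (a₂ ∘ₗ u)).comap (range a₂ ⊓ range v).subtype)) := by
  set T := range a₂ ⊓ range v
  have hcomm' : ∀ x, a₃ (p x) = q (a₂ x) := LinearMap.congr_fun hcomm
  let e := LinearEquiv.ofInjective a₂ ha₂
  let s : T →ₗ[R] M₁ := e.symm.toLinearMap ∘ₗ Submodule.inclusion inf_le_left
  have hs : ∀ w : T, a₂ (s w) = w := fun w => congrArg Subtype.val (e.apply_symm_apply _)
  let ψ : T →ₗ[R] ker a₃ := codRestrict _ (p ∘ₗ s) fun w => by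
    rw [mem_ker, LinearMap.comp_apply, hcomm', hs]
    exact (hvq _).mpr w.2.2
  have hψ : Surjective ψ := by
    rintro ⟨y, hy⟩
    obtain ⟨x, rfl⟩ := hp y
    have hx : a₂ x ∈ T := ⟨⟨x, rfl⟩, (hvq _).mp (by rw [← hcomm', hy])⟩
    exact ⟨⟨a₂ x, hx⟩, Subtype.ext (congrArg p (ha₂ (hs ⟨a₂ x, hx⟩)))⟩
  have hker : ker ψ = (range (a₂ ∘ₗ u)).comap T.subtype := by
    ext w
    rw [mem_ker, Submodule.mem_comap, Subtype.ext_iff]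
    change p (s w) = 0 ↔ (w : Y₂) ∈ range (a₂ ∘ₗ u)
    rw [hup, ← hs w]
    simp only [Set.mem_range, mem_range, LinearMap.comp_apply, ha₂.eq_iff]
  exact ⟨(ψ.quotKerEquivOfSurjective hψ).symm.trans (Submodule.quotEquivOfEq _ _ hker)⟩

theorem LinearMap.exact_subtype_ker_rangeRestrict (f : M₁ →ₗ[R] M₂) :
    Exact (ker f).subtype f.rangeRestrict :=
  exact_iff.mpr <| by rw [ker_rangeRestrict, Submodule.range_subtype]

theorem LinearMap.exists_injective_exact_exact_surjective {T T' : Type*}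
    [AddCommGroup T] [Module R T] [AddCommGroup T'] [Module R T'] (φ : M₁ →ₗ[R] M₂)
    (e : T ≃ₗ[R] ker φ) (e' : (M₂ ⧸ range φ) ≃ₗ[R] T') :
    ∃ (α : T →ₗ[R] M₁) (g : M₂ →ₗ[R] T'),
      Injective α ∧ Exact α φ ∧ Exact φ g ∧ Surjective g := by
  refine ⟨(ker φ).subtype ∘ₗ e.toLinearMap, e'.toLinearMap ∘ₗ (range φ).mkQ,
    Subtype.val_injective.comp e.injective, ?_, ?_, e'.surjective.comp (range φ).mkQ_surjective⟩
  · exact e.surjective.comp_exact_iff_exact.mpr (exact_subtype_ker_map φ)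
  · exact e'.injective.comp_exact_iff_exact.mpr (exact_map_mkQ_range φ)

end LinearAlgebra

section Balancing

variable {R : Type*} [CommRing R] {Z A B K P Q : Type*}
  [AddCommGroup Z] [Module R Z] [AddCommGroup A] [Module R A] [AddCommGroup B] [Module R B]
  [AddCommGroup K] [Module R K] [AddCommGroup P] [Module R P] [AddCommGroup Q] [Module R Q]

theorem nonempty_ker_lTensor_equiv_ker_rTensor [Module.Flat R A] [Module.Flat R P]
    {i : Z →ₗ[R] A} {p : A →ₗ[R] B} (hi : Injective i) (hip : Exact i p) (hp : Surjective p)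
    {j : K →ₗ[R] P} {q : P →ₗ[R] Q} (hj : Injective j) (hjq : Exact j q) (hq : Surjective q) :
    Nonempty (ker (j.lTensor B) ≃ₗ[R] ker (i.rTensor Q)) := by
  obtain ⟨e⟩ := nonempty_ker_equiv_quotient_inf_range (rTensor_exact K hip hp)
    (rTensor_surjective K hp) (rTensor_exact P hip hp)
    (Module.Flat.lTensor_preserves_injective_linearMap j hj) (j.lTensor B)
    (by rw [lTensor_comp_rTensor, rTensor_comp_lTensor])
  obtain ⟨e'⟩ := nonempty_ker_equiv_quotient_inf_range (lTensor_exact Z hjq hq)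
    (lTensor_surjective Z hq) (lTensor_exact A hjq hq)
    (Module.Flat.rTensor_preserves_injective_linearMap i hi) (i.rTensor Q)
    (by rw [rTensor_comp_lTensor, lTensor_comp_rTensor])
  rw [inf_comm, rTensor_comp_lTensor, ← lTensor_comp_rTensor] at e'
  exact ⟨e.trans e'.symm⟩

end Balancing

theorem CategoryTheory.ProjectiveResolution.nonempty_tor_one_equiv_ker_lTensor (X : Type)
    [AddCommGroup X] [Module R X] {N : ModuleCat R} (P : ProjectiveResolution N) :
    Nonempty (((Tor (ModuleCat R) 1).obj (ModuleCat.of R X)).obj N ≃ₗ[R]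
      ker ((ker (P.π.f 0).hom).subtype.lTensor X)) := by
  let F := (MonoidalCategory.tensoringLeft (ModuleCat R)).obj (ModuleCat.of R X)
  let S := ((F.mapHomologicalComplex (ComplexShape.down ℕ)).obj P.complex).sc' 2 1 0
  let E : ((Tor (ModuleCat R) 1).obj (ModuleCat.of R X)).obj N ≅ S.homology :=
    P.isoLeftDerivedObj F 1 ≪≫ HomologicalComplex.homologyIsoSc' _ 2 1 0 (by simp) (by simp)
  let d₁ := (P.complex.d 1 0).hom
  let d₂ := (P.complex.d 2 1).hom
  let ε := (P.π.f 0).hom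
  let π : P.complex.X 1 →ₗ[R] ker ε :=
    codRestrict _ d₁ fun x =>
      LinearMap.congr_fun (congrArg ModuleCat.Hom.hom P.complex_d_comp_π_f_zero) x
  have hπ : Surjective π := by
    rintro ⟨y, hy⟩
    rw [← P.exact₀.moduleCat_range_eq_ker] at hy
    obtain ⟨x, rfl⟩ := hy
    exact ⟨x, rfl⟩
  have hd₂d₁ : Exact d₂ d₁ :=
    (ShortComplex.ShortExact.moduleCat_exact_iff_function_exact _).mp (P.exact_succ 0)
  have hd₂π : Exact d₂ π :=
    (Injective.comp_exact_iff_exact (i := (ker ε).subtype) Subtype.val_injective).mp hd₂d₁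
  obtain ⟨E'⟩ := (lTensor_exact X hd₂π hπ).nonempty_ker_quotient_range_equiv_ker
    (lTensor_surjective X hπ) ((ker ε).subtype.lTensor X) (g := S.g.hom)
    (by rw [← lTensor_comp]; rfl) S.moduleCatToCycles fun _ => rfl
  exact ⟨E.toLinearEquiv.trans (S.moduleCatHomologyIso.toLinearEquiv.trans E')⟩

theorem nonempty_tor_one_equiv_ker_rTensor {Z A X : Type} [AddCommGroup Z] [Module R Z]
    [AddCommGroup A] [Module R A] [AddCommGroup X] [Module R X] [Module.Flat R A]
    {i : Z →ₗ[R] A} {p : A →ₗ[R] X} (hi : Injective i) (hip : Exact i p)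
    (hp : Surjective p) :
    Nonempty (((Tor (ModuleCat R) 1).obj (ModuleCat.of R X)).obj (ModuleCat.of R N) ≃ₗ[R]
      ker (i.rTensor N)) := by
  let P := projectiveResolution (ModuleCat.of R N)
  have hε : Surjective (P.π.f 0) := (ModuleCat.epi_iff_surjective _).mp inferInstance
  obtain ⟨e⟩ := P.nonempty_tor_one_equiv_ker_lTensor X
  obtain ⟨e'⟩ := nonempty_ker_lTensor_equiv_ker_rTensor hi hip hp Subtype.val_injective
    (exact_subtype_ker_map _) hε
  exact ⟨e.trans e'⟩

theorem ker_cycleComparison (f : Fa →ₗ[R] Fb) :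
    ker (cycleComparison f N) = ker ((ker f).subtype.rTensor N) :=
  ker_codRestrict _ _ _

theorem nonempty_quotient_range_cycleComparison_equiv (f : Fa →ₗ[R] Fb) :
    Nonempty ((ker (f.rTensor N) ⧸ range (cycleComparison f N)) ≃ₗ[R]
      ker ((range f).subtype.rTensor N)) :=
  (rTensor_exact N f.exact_subtype_ker_rangeRestrict f.surjective_rangeRestrict
    ).nonempty_ker_quotient_range_equiv_ker (rTensor_surjective N
      f.surjective_rangeRestrict) _ (by rw [← rTensor_comp]; rfl) _ fun _ => rfl

/-- **Lemma 1.1 (serra), first part.** Let `R` be a ring and `F` a chain complex of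
`R`-modules with `F_a` and `F_{a-1}` flat; only the differential `∂_a : F_a → F_{a-1}`
is relevant, since `Z_a = ker ∂_a`, `B_{a-1} = im ∂_a` and `C_{a-1} = coker ∂_a`.
For an `R`-module `N` there is an exact sequence
`0 → Tor₁(B_{a-1}, N) → Z_a ⊗ N → Z_a(F ⊗ N) → Tor₁(C_{a-1}, N) → 0`,
whose middle map is the natural map `φ_a : z ⊗ x ↦ z ⊗ x`. -/
theorem tor_cycles_exact_sequence [Module.Flat R Fa] [Module.Flat R Fb] (f : Fa →ₗ[R] Fb) :
    ∃ (α : ↑(((Tor (ModuleCat R) 1).obj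
          (ModuleCat.of R ↥(LinearMap.range f))).obj (ModuleCat.of R N)) →ₗ[R]
            (↥(LinearMap.ker f) ⊗[R] N))
      (g : ↥(LinearMap.ker (f.rTensor N)) →ₗ[R]
        ↑(((Tor (ModuleCat R) 1).obj
          (ModuleCat.of R (Fb ⧸ LinearMap.range f))).obj (ModuleCat.of R N))),
      Function.Injective α ∧
      Function.Exact α (cycleComparison f N) ∧
      Function.Exact (cycleComparison f N) g ∧
      Function.Surjective g := by
  obtain ⟨eB⟩ := nonempty_tor_one_equiv_ker_rTensor (N := N) Subtype.val_injective
    f.exact_subtype_ker_rangeRestrict f.surjective_rangeRestrict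
  obtain ⟨eC⟩ := nonempty_tor_one_equiv_ker_rTensor (N := N) Subtype.val_injective
    (exact_subtype_mkQ (range f)) (Submodule.mkQ_surjective _)
  obtain ⟨eQ⟩ := nonempty_quotient_range_cycleComparison_equiv (N := N) f
  exact (cycleComparison f N).exists_injective_exact_exact_surjective
    (eB.trans (LinearEquiv.ofEq _ _ (ker_cycleComparison f).symm)) (eQ.trans eC.symm)
end

section
/- Let K be the Koszul complex on an R-module map E_1 → R (E_1 free) with differential ∂, and M an R-module; set K^M = K ⊗_R M. For non-negative integers a, b with n = a + b, let β_{a,b} : Z_n(K^M) → Z_a(K ⊗_R Z_b(K^M)) be the map induced by the diagonal Δ ⊗ M followed by projection to the (a,b)-component, and let α_{a,b} : Z_a(K ⊗_R Z_b(K^M)) → Z_n(K^M) be induced by the multiplication μ ⊗ M. Then α_{a,b} ∘ β_{a,b} = C(a+b, a) · id on Z_{a+b}(K^M). -/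
/-!
On `⋀ⁿ V` the map `μ ∘ (π_a ⊗ π_b) ∘ Δ` is multiplication by `C(n, a)`, by induction on `n`:
`Δ (ι x * w) = (ι x ⊗ 1 + 1 ⊗ ι x) * Δ w`, and left multiplication by `ι x ⊗ 1` (resp. `1 ⊗ ι x`)
shifts the left (resp. right) degree by one, so the two summands produce Pascal's rule
`C(n + 1, a + 1) = C(n, a) + C(n, a + 1)`. The Koszul sign `(-1)^|u|` that `1 ⊗ ι x` picks up when
passing `u` is cancelled by the same sign from moving `ι x` back past `u` in `⋀ V`.
Tensoring with `M` is then functoriality of `rTensor`.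
-/

open TensorProduct ExteriorAlgebra DirectSum

namespace GradedTensorProduct

variable {ι R A B : Type*} [CommSemiring ι] [DecidableEq ι] [CommRing R] [Ring A] [Ring B]
  [Algebra R A] [Algebra R B] {𝒜 : ι → Submodule R A} {ℬ : ι → Submodule R B}
  [GradedAlgebra 𝒜] [GradedAlgebra ℬ]

theorem induction_on_coe_tmul {motive : 𝒜 ᵍ⊗[R] ℬ → Prop} (t : 𝒜 ᵍ⊗[R] ℬ) (zero : motive 0)
    (coe_tmul : ∀ i (a : 𝒜 i) (b : B), motive ((a : A) ᵍ⊗ₜ[R] b))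
    (add : ∀ s t, motive s → motive t → motive (s + t)) : motive t := by
  change motive (of R 𝒜 ℬ ((of R 𝒜 ℬ).symm t))
  induction (of R 𝒜 ℬ).symm t using TensorProduct.induction_on with
  | zero => rwa [map_zero]
  | tmul a b =>
    induction a using DirectSum.Decomposition.inductionOn 𝒜 with
    | zero => rwa [zero_tmul, map_zero]
    | homogeneous a => exact coe_tmul _ a b
    | add a a' ha ha' => rw [add_tmul, map_add]; exact add _ _ ha ha'
  | add s s' hs hs' => rw [map_add]; exact add _ _ hs hs'

end GradedTensorProduct

namespace ExteriorAlgebra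

variable {R V : Type*} [CommRing R] [AddCommGroup V] [Module R V]

local notation "𝒜" => fun i : ℕ => ⋀[R]^i V

theorem ι_mem_exteriorPower_one (x : V) : ι R x ∈ ⋀[R]^1 V := by
  simpa only [pow_one] using LinearMap.mem_range_self _ x

theorem proj_succ_ι_mul (x : V) (u : ExteriorAlgebra R V) (i : ℕ) :
    GradedAlgebra.proj 𝒜 (i + 1) (ι R x * u) = ι R x * GradedAlgebra.proj 𝒜 i u := by
  rw [GradedAlgebra.proj_apply, GradedAlgebra.proj_apply, add_comm,
    coe_decompose_mul_add_of_left_mem 𝒜 (ι_mem_exteriorPower_one x)]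

theorem proj_zero_ι_mul (x : V) (u : ExteriorAlgebra R V) :
    GradedAlgebra.proj 𝒜 0 (ι R x * u) = 0 := by
  rw [GradedAlgebra.proj_apply,
    coe_decompose_mul_of_left_mem_of_not_le 𝒜 (ι_mem_exteriorPower_one x) (by norm_num)]

theorem mul_ι_of_mem_exteriorPower {a : ℕ} {u : ExteriorAlgebra R V} (hu : u ∈ ⋀[R]^a V)
    (x : V) : u * ι R x = (-1 : ℤˣ) ^ a • (ι R x * u) := by
  induction hu using Submodule.pow_induction_on_left' with
  | algebraMap r => rw [pow_zero, one_smul, Algebra.commutes]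
  | add u v i _ _ ihu ihv => rw [add_mul, mul_add, ihu, ihv, smul_add]
  | mem_mul y hy i u _ ih =>
    obtain ⟨y, rfl⟩ := hy
    rw [mul_assoc, ih, mul_smul_comm, ← mul_assoc,
      eq_neg_of_add_eq_zero_left (ι_add_mul_swap y x), neg_mul, smul_neg, pow_succ, mul_smul,
      Units.neg_smul, one_smul, mul_assoc, smul_neg]

variable (R V) in
noncomputable def mulProj (a b : ℕ) : 𝒜 ᵍ⊗[R] 𝒜 →ₗ[R] ExteriorAlgebra R V :=
  (LinearMap.mul' R (ExteriorAlgebra R V)).comp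
    ((TensorProduct.map (GradedAlgebra.proj 𝒜 a) (GradedAlgebra.proj 𝒜 b)).comp
      (GradedTensorProduct.of R 𝒜 𝒜).symm.toLinearMap)

theorem mulProj_tmul (a b : ℕ) (u v : ExteriorAlgebra R V) :
    mulProj R V a b (u ᵍ⊗ₜ[R] v) = GradedAlgebra.proj 𝒜 a u * GradedAlgebra.proj 𝒜 b v :=
  rfl

theorem mulProj_succ_ι_tmul_one_mul (x : V) (a b : ℕ) (t : 𝒜 ᵍ⊗[R] 𝒜) :
    mulProj R V (a + 1) b ((ι R x ᵍ⊗ₜ[R] (1 : ExteriorAlgebra R V)) * t) =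
      ι R x * mulProj R V a b t := by
  induction t using GradedTensorProduct.induction_on_coe_tmul with
  | zero => rw [mul_zero, map_zero, map_zero, mul_zero]
  | coe_tmul i u v =>
    rw [GradedTensorProduct.tmul_one_mul_coe_tmul, mulProj_tmul, mulProj_tmul, proj_succ_ι_mul,
      mul_assoc]
  | add s t hs ht => rw [mul_add, map_add, map_add, hs, ht, mul_add]

theorem mulProj_zero_ι_tmul_one_mul (x : V) (b : ℕ) (t : 𝒜 ᵍ⊗[R] 𝒜) :
    mulProj R V 0 b ((ι R x ᵍ⊗ₜ[R] (1 : ExteriorAlgebra R V)) * t) = 0 := by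
  induction t using GradedTensorProduct.induction_on_coe_tmul with
  | zero => rw [mul_zero, map_zero]
  | coe_tmul i u v =>
    rw [GradedTensorProduct.tmul_one_mul_coe_tmul, mulProj_tmul, proj_zero_ι_mul, zero_mul]
  | add s t hs ht => rw [mul_add, map_add, hs, ht, add_zero]

theorem one_tmul_ι_mul_coe_tmul (x : V) {i : ℕ} (u : ⋀[R]^i V) (v : ExteriorAlgebra R V) :
    (((1 : ExteriorAlgebra R V) ᵍ⊗ₜ[R] ι R x) * ((u : ExteriorAlgebra R V) ᵍ⊗ₜ[R] v) :
      𝒜 ᵍ⊗[R] 𝒜) = (-1 : ℤˣ) ^ i • ((u : ExteriorAlgebra R V) ᵍ⊗ₜ[R] (ι R x * v)) := by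
  have h :=
    GradedTensorProduct.tmul_coe_mul_coe_tmul 𝒜 𝒜 1 ⟨ι R x, ι_mem_exteriorPower_one x⟩ u v
  rwa [one_mul, one_mul] at h

theorem mulProj_succ_one_tmul_ι_mul (x : V) (a b : ℕ) (t : 𝒜 ᵍ⊗[R] 𝒜) :
    mulProj R V a (b + 1) (((1 : ExteriorAlgebra R V) ᵍ⊗ₜ[R] ι R x) * t) =
      ι R x * mulProj R V a b t := by
  induction t using GradedTensorProduct.induction_on_coe_tmul with
  | zero => rw [mul_zero, map_zero, map_zero, mul_zero]
  | coe_tmul i u v =>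
    rw [one_tmul_ι_mul_coe_tmul, LinearMap.map_smul_of_tower, mulProj_tmul, mulProj_tmul,
      proj_succ_ι_mul, GradedAlgebra.proj_apply]
    obtain rfl | hia := eq_or_ne i a
    · rw [decompose_of_mem_same 𝒜 u.2, ← mul_assoc, mul_ι_of_mem_exteriorPower u.2,
        smul_mul_assoc, smul_smul, ← pow_add, Even.neg_one_pow ⟨i, rfl⟩, one_smul, mul_assoc]
    · rw [decompose_of_mem_ne 𝒜 u.2 hia, zero_mul, smul_zero, zero_mul, mul_zero]
  | add s t hs ht => rw [mul_add, map_add, map_add, hs, ht, mul_add]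

theorem mulProj_zero_one_tmul_ι_mul (x : V) (a : ℕ) (t : 𝒜 ᵍ⊗[R] 𝒜) :
    mulProj R V a 0 (((1 : ExteriorAlgebra R V) ᵍ⊗ₜ[R] ι R x) * t) = 0 := by
  induction t using GradedTensorProduct.induction_on_coe_tmul with
  | zero => rw [mul_zero, map_zero]
  | coe_tmul i u v =>
    rw [one_tmul_ι_mul_coe_tmul, LinearMap.map_smul_of_tower, mulProj_tmul, proj_zero_ι_mul,
      mul_zero, smul_zero]
  | add s t hs ht => rw [mul_add, map_add, hs, ht, add_zero]

theorem mulProj_diagonal_of_mem_exteriorPower (Δ : ExteriorAlgebra R V →ₐ[R] 𝒜 ᵍ⊗[R] 𝒜)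
    (hΔ : ∀ x : V, Δ (ι R x) =
      ι R x ᵍ⊗ₜ[R] (1 : ExteriorAlgebra R V) + (1 : ExteriorAlgebra R V) ᵍ⊗ₜ[R] ι R x)
    {n : ℕ} {w : ExteriorAlgebra R V} (hw : w ∈ ⋀[R]^n V) {a b : ℕ} (hab : a + b = n) :
    mulProj R V a b (Δ w) = n.choose a • w := by
  induction hw using Submodule.pow_induction_on_left' generalizing a b with
  | algebraMap r =>
    obtain ⟨rfl, rfl⟩ := Nat.add_eq_zero_iff.mp hab
    rw [AlgHom.commutes, GradedTensorProduct.algebraMap_def, mulProj_tmul,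
      GradedAlgebra.proj_apply, GradedAlgebra.proj_apply,
      decompose_of_mem_same 𝒜 (SetLike.algebraMap_mem_graded 𝒜 r),
      decompose_of_mem_same 𝒜 (SetLike.one_mem_graded 𝒜), mul_one, Nat.choose_zero_right,
      one_smul]
  | add u v i _ _ ihu ihv => rw [map_add, map_add, ihu hab, ihv hab, smul_add]
  | mem_mul y hy i u _ ih =>
    obtain ⟨x, rfl⟩ := hy
    rw [map_mul, hΔ, add_mul, map_add]
    rcases a with _ | a <;> rcases b with _ | b
    · omega
    · obtain rfl : b = i := by omega
      rw [mulProj_zero_ι_tmul_one_mul, mulProj_succ_one_tmul_ι_mul, ih (zero_add b), zero_add,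
        Nat.choose_zero_right, Nat.choose_zero_right, one_smul, one_smul]
    · obtain rfl : a = i := by omega
      rw [mulProj_succ_ι_tmul_one_mul, mulProj_zero_one_tmul_ι_mul, ih (add_zero a), add_zero,
        Nat.choose_self, Nat.choose_self, one_smul, one_smul]
    · rw [mulProj_succ_ι_tmul_one_mul, mulProj_succ_one_tmul_ι_mul,
        ih (by omega : a + (b + 1) = i), ih (by omega : a + 1 + b = i), Nat.choose_succ_succ',
        mul_smul_comm, mul_smul_comm, add_smul]

end ExteriorAlgebra

theorem alpha_beta_eq_binomial_smul_general
    (R : Type) [CommRing R] (V : Type) [AddCommGroup V] [Module R V]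
    (M : Type) [AddCommGroup M] [Module R M]
    (Δ : ExteriorAlgebra R V →ₐ[R]
      GradedTensorProduct R (fun i : ℕ => ⋀[R]^i V) (fun i : ℕ => ⋀[R]^i V))
    (hΔ : ∀ v : V, Δ (ι R v) =
      (ι R v) ᵍ⊗ₜ[R] (1 : ExteriorAlgebra R V) + (1 : ExteriorAlgebra R V) ᵍ⊗ₜ[R] (ι R v))
    (a b : ℕ) (z : ExteriorAlgebra R V ⊗[R] M)
    (hz : z ∈ LinearMap.range ((Submodule.subtype (⋀[R]^(a+b) V)).rTensor M)) :
    LinearMap.rTensor M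
      ((LinearMap.mul' R (ExteriorAlgebra R V)).comp
        ((TensorProduct.map
            (GradedAlgebra.proj (fun i : ℕ => ⋀[R]^i V) a)
            (GradedAlgebra.proj (fun i : ℕ => ⋀[R]^i V) b)).comp
          (((GradedTensorProduct.of R _ _).symm.toLinearMap).comp Δ.toLinearMap))) z
      = ((a + b).choose a) • z := by
  obtain ⟨y, rfl⟩ := hz
  have hΔ_restrict : (ExteriorAlgebra.mulProj R V a b ∘ₗ Δ.toLinearMap) ∘ₗ (⋀[R]^(a+b) V).subtype
      = (a + b).choose a • (⋀[R]^(a+b) V).subtype :=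
    LinearMap.ext fun w =>
      ExteriorAlgebra.mulProj_diagonal_of_mem_exteriorPower Δ hΔ w.2 rfl
  change ((ExteriorAlgebra.mulProj R V a b ∘ₗ Δ.toLinearMap).rTensor M ∘ₗ
    (⋀[R]^(a+b) V).subtype.rTensor M) y = _
  rw [← LinearMap.rTensor_comp, hΔ_restrict, ← Nat.cast_smul_eq_nsmul R, LinearMap.rTensor_smul,
    LinearMap.smul_apply, Nat.cast_smul_eq_nsmul]

/-- **Lemma 2.6 (BRS).** Let `K` be the Koszul complex of an `R`-module map `f : E₁ → R`
(`E₁` free), i.e. the exterior algebra `E = ⋀ E₁` with the unique degree `-1` derivation `dK`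
extending `f` (characterized by `dK(1) = 0` and `dK(ι x · w) = f x • w - ι x · dK w`), and let
`M` be an `R`-module, `K^M = K ⊗ M`.  Let `Δ` be the diagonal of `E` (the unique graded
algebra map to the Koszul-signed tensor square with `Δ(ι x) = ι x ⊗ 1 + 1 ⊗ ι x`).  For
`a, b ≥ 0` with `n = a + b`, the composition `α_{a,b} ∘ β_{a,b}` — induced on cycles by
`μ ⊗ M` and the `(a,b)`-component of `Δ ⊗ M` — equals `C(a+b, a) • id` on `Z_{a+b}(K^M)`. -/
theorem alpha_beta_eq_binomial_smul
    (R : Type) [CommRing R] (V : Type) [AddCommGroup V] [Module R V] [Module.Free R V]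
    (M : Type) [AddCommGroup M] [Module R M]
    (f : V →ₗ[R] R)
    (dK : ExteriorAlgebra R V →ₗ[R] ExteriorAlgebra R V)
    (hdK1 : dK 1 = 0)
    (hdK : ∀ (v : V) (w : ExteriorAlgebra R V), dK (ι R v * w) = f v • w - ι R v * dK w)
    (Δ : ExteriorAlgebra R V →ₐ[R]
      GradedTensorProduct R (fun i : ℕ => ⋀[R]^i V) (fun i : ℕ => ⋀[R]^i V))
    (hΔ : ∀ v : V, Δ (ι R v) =
      (ι R v) ᵍ⊗ₜ[R] (1 : ExteriorAlgebra R V) + (1 : ExteriorAlgebra R V) ᵍ⊗ₜ[R] (ι R v))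
    (a b : ℕ) (z : ExteriorAlgebra R V ⊗[R] M)
    (hz : z ∈ LinearMap.range ((Submodule.subtype (⋀[R]^(a+b) V)).rTensor M))
    (hcycle : dK.rTensor M z = 0) :
    LinearMap.rTensor M
      ((LinearMap.mul' R (ExteriorAlgebra R V)).comp
        ((TensorProduct.map
            (GradedAlgebra.proj (fun i : ℕ => ⋀[R]^i V) a)
            (GradedAlgebra.proj (fun i : ℕ => ⋀[R]^i V) b)).comp
          (((GradedTensorProduct.of R _ _).symm.toLinearMap).comp Δ.toLinearMap))) z
      = ((a + b).choose a) • z :=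
  alpha_beta_eq_binomial_smul_general R V M Δ hΔ a b z hz
end

section
/- Say a prime p is good for a non-negative integer n if the binomial coefficient C(n, i) is not divisible by p for all 0 ≤ i ≤ n. Then p is good for n if and only if p > n, or n + 1 = p^s · u for some integers s ≥ 1 and 2 ≤ u ≤ p. Moreover, for a given n, at most one prime p with p ≤ n satisfies the second condition. -/
/-!
By Lucas' theorem, `C(n, i) ≡ C(n % p, i % p) · C(n / p, i / p) (mod p)`. For `p ≤ n` this makes
`p` good for `n` exactly when the last base-`p` digit of `n` is `p - 1` and `p` is good for `n / p`:
a smaller last digit `r` is beaten by `i = r + 1`. So `p` is good for `n` iff every base-`p` digit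
of `n` but the leading one is `p - 1`, i.e. `n + 1 = p ^ s * u` with `1 ≤ u ≤ p`. If two primes
`p < q` both had such a representation with a positive exponent of `q`, then `q` would divide the
cofactor `u ≤ p` of `p ^ s`, which is absurd.
-/

/-- A prime `p` is *good* for a non-negative integer `n` if `p ∤ C(n, i)` for all `0 ≤ i ≤ n`. -/
def IsGoodPrime (p n : ℕ) : Prop :=
  ∀ i : ℕ, i ≤ n → ¬ (p ∣ Nat.choose n i)

namespace Nat

theorem mod_eq_sub_one_iff_dvd_add_one {p n : ℕ} (hp : 0 < p) : n % p = p - 1 ↔ p ∣ n + 1 := by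
  have hdiv := div_add_mod n p
  have hlt := mod_lt n hp
  constructor
  · intro h
    exact ⟨n / p + 1, by rw [mul_add]; omega⟩
  · intro h
    have h' : p ∣ n % p + 1 := by
      rwa [← Nat.dvd_add_right (dvd_mul_right p (n / p)), ← add_assoc, hdiv]
    have := le_of_dvd (by omega) h'
    omega

theorem Prime.dvd_choose_iff_lucas {p n k : ℕ} (hp : p.Prime) :
    p ∣ choose n k ↔ p ∣ choose (n % p) (k % p) ∨ p ∣ choose (n / p) (k / p) := by
  have := Fact.mk hp
  rw [← hp.dvd_mul]
  exact Choose.choose_modEq_choose_mod_mul_choose_div_nat.dvd_iff dvd_rfl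

theorem Prime.not_dvd_choose_of_lt {p n k : ℕ} (hp : p.Prime) (hn : n < p) (hk : k ≤ n) :
    ¬ p ∣ choose n k :=
  (hp.coprime_iff_not_dvd).1 (hp.coprime_choose_of_lt hn hk)

end Nat

theorem isGoodPrime_of_lt {p n : ℕ} (hp : p.Prime) (h : n < p) : IsGoodPrime p n :=
  fun _ ↦ hp.not_dvd_choose_of_lt h

theorem isGoodPrime_iff_of_le {p n : ℕ} (hp : p.Prime) (hn : p ≤ n) :
    IsGoodPrime p n ↔ p ∣ n + 1 ∧ IsGoodPrime p (n / p) := by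
  have hp0 := hp.pos
  rw [← Nat.mod_eq_sub_one_iff_dvd_add_one hp0]
  constructor
  · intro hgood
    refine ⟨?_, fun j hj hdvd ↦ ?_⟩
    · -- otherwise `i = n % p + 1 < p` has `C(n % p, i % p) = 0`
      by_contra hmod
      have hi : n % p + 1 < p := by have := Nat.mod_lt n hp0; omega
      refine hgood (n % p + 1) (by omega) (hp.dvd_choose_iff_lucas.2 (Or.inl ?_))
      rw [Nat.mod_eq_of_lt hi, Nat.choose_succ_self]
      exact dvd_zero p
    · refine hgood (j * p) ((Nat.mul_le_mul_right p hj).trans (Nat.div_mul_le_self n p))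
        (hp.dvd_choose_iff_lucas.2 (Or.inr ?_))
      rwa [Nat.mul_div_cancel j hp0]
  · rintro ⟨hmod, hgood⟩ i hi hdvd
    rcases hp.dvd_choose_iff_lucas.1 hdvd with h | h
    · rw [hmod] at h
      exact hp.not_dvd_choose_of_lt (by omega) (by have := Nat.mod_lt i hp0; omega) h
    · exact hgood _ (Nat.div_le_div_right hi) h

theorem exists_pow_mul_iff_dvd {p m : ℕ} (hp : 0 < p) (hm : p < m) :
    (∃ s u : ℕ, 1 ≤ u ∧ u ≤ p ∧ m = p ^ s * u) ↔
      p ∣ m ∧ ∃ s u : ℕ, 1 ≤ u ∧ u ≤ p ∧ m / p = p ^ s * u := by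
  constructor
  · rintro ⟨_ | s, u, hu, hup, rfl⟩
    · simp only [pow_zero, one_mul] at hm
      omega
    · rw [pow_succ, mul_comm _ p, mul_assoc]
      exact ⟨dvd_mul_right p _, s, u, hu, hup, Nat.mul_div_cancel_left _ hp⟩
  · rintro ⟨hdvd, s, u, hu, hup, hs⟩
    refine ⟨s + 1, u, hu, hup, ?_⟩
    rw [← Nat.mul_div_cancel' hdvd, hs, pow_succ, mul_comm _ p, mul_assoc]

theorem isGoodPrime_iff_exists_pow_mul {p : ℕ} (hp : p.Prime) (n : ℕ) :
    IsGoodPrime p n ↔ ∃ s u : ℕ, 1 ≤ u ∧ u ≤ p ∧ n + 1 = p ^ s * u := by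
  induction n using Nat.strong_induction_on with
  | _ n ih =>
    rcases lt_or_ge n p with hn | hn
    · exact iff_of_true (isGoodPrime_of_lt hp hn) ⟨0, n + 1, by omega, hn, by ring⟩
    · have hdiv : n / p < n := Nat.div_lt_self (hp.pos.trans_le hn) hp.one_lt
      rw [isGoodPrime_iff_of_le hp hn, ih _ hdiv,
        exists_pow_mul_iff_dvd (m := n + 1) hp.pos (Nat.lt_succ_of_le hn)]
      exact and_congr_right fun hdvd ↦ by rw [Nat.succ_div_of_dvd hdvd]

theorem exists_pow_mul_iff_lt_or {p n : ℕ} (hp : 2 ≤ p) :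
    (∃ s u : ℕ, 1 ≤ u ∧ u ≤ p ∧ n + 1 = p ^ s * u) ↔
      n < p ∨ ∃ s u : ℕ, 1 ≤ s ∧ 2 ≤ u ∧ u ≤ p ∧ n + 1 = p ^ s * u := by
  constructor
  · rintro ⟨_ | _ | s, u, hu, hup, h⟩
    · left
      simp only [pow_zero, one_mul] at h
      omega
    · rcases (show u = 1 ∨ 2 ≤ u by omega) with rfl | hu2
      · left
        simp only [zero_add, pow_one, mul_one] at h
        omega
      · exact Or.inr ⟨1, u, le_rfl, hu2, hup, h⟩
    · rcases (show u = 1 ∨ 2 ≤ u by omega) with rfl | hu2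
      · exact Or.inr ⟨s + 1, p, by omega, hp, le_rfl, by rw [h, mul_one, pow_succ]⟩
      · exact Or.inr ⟨s + 2, u, by omega, hu2, hup, h⟩
  · rintro (hn | ⟨s, u, -, hu, hup, h⟩)
    · exact ⟨0, n + 1, by omega, hn, by ring⟩
    · exact ⟨s, u, by omega, hup, h⟩

theorem le_of_pow_mul_eq_pow_mul {p q s t u v : ℕ} (hp : p.Prime) (hq : q.Prime) (ht : 1 ≤ t)
    (hu : u ≠ 0) (hup : u ≤ p) (h : p ^ s * u = q ^ t * v) : q ≤ p := by
  have hdvd : q ∣ p ^ s * u := h ▸ (dvd_pow_self q (by omega)).mul_right v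
  rcases hq.dvd_mul.1 hdvd with hqp | hqu
  · exact ((Nat.prime_dvd_prime_iff_eq hq hp).1 (hq.dvd_of_dvd_pow hqp)).le
  · exact (Nat.le_of_dvd (Nat.pos_of_ne_zero hu) hqu).trans hup

/-- **Lemma 5.6 (good primes).** A prime `p` is good for `n ≥ 0` if and only if `p > n`, or
`n + 1 = p ^ s * u` for some integers `s ≥ 1` and `2 ≤ u ≤ p`.  Moreover, for a given `n`, at
most one prime `p ≤ n` satisfies the second condition. -/
theorem isGoodPrime_iff (n : ℕ) :
    (∀ p : ℕ, p.Prime →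
      (IsGoodPrime p n ↔
        n < p ∨ ∃ s u : ℕ, 1 ≤ s ∧ 2 ≤ u ∧ u ≤ p ∧ n + 1 = p ^ s * u))
    ∧ (∀ p q : ℕ, p.Prime → q.Prime → p ≤ n → q ≤ n →
        (∃ s u : ℕ, 1 ≤ s ∧ 2 ≤ u ∧ u ≤ p ∧ n + 1 = p ^ s * u) →
        (∃ s u : ℕ, 1 ≤ s ∧ 2 ≤ u ∧ u ≤ q ∧ n + 1 = q ^ s * u) →
        p = q) := by
  refine ⟨fun p hp ↦ ?_, ?_⟩
  · rw [isGoodPrime_iff_exists_pow_mul hp, exists_pow_mul_iff_lt_or hp.two_le]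
  · rintro p q hp hq - - ⟨s, u, hs, hu, hup, hpu⟩ ⟨t, v, ht, hv, hvq, hqv⟩
    exact le_antisymm
      (le_of_pow_mul_eq_pow_mul hq hp hs (by omega) hvq (hqv.symm.trans hpu))
      (le_of_pow_mul_eq_pow_mul hp hq ht (by omega) hup (hpu.symm.trans hqv))
end
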